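/- arXiv:1102.5456 — 2 statements merged into one kernel-verified Lean document; each statement's English description precedes it below -/
import Mathlib

section
/- In a discrete semimodular lattice, two elements x and y satisfy x ≡ y (where ≡ is the reflexive-transitive closure of the relation 'x ∼ y iff some z is covered by both x and y') if and only if h(x ∧ y, x) = h(x ∧ y, y). -/
/-- A maximal chain of the interval `[x, y]`. -/
def MaxChainIn {α : Type*} [Lattice α] (x y : α) (C : Set α) : Prop :=
  C ⊆ Set.Icc x y ∧ IsChain (· ≤ ·) C ∧
    ∀ D : Set α, D ⊆ Set.Icc x y → IsChain (· ≤ ·) D → C ⊆ D → C = D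

/-- A lattice is discrete if every interval contains a finite maximal chain. -/
def IsDiscreteLattice (α : Type*) [Lattice α] : Prop :=
  ∀ x y : α, x ≤ y → ∃ C : Set α, MaxChainIn x y C ∧ C.Finite

/-- Semimodularity (lower covering condition): if `x` covers `x ⊓ y` then `x ⊔ y` covers `y`. -/
def IsSemimodular (α : Type*) [Lattice α] : Prop :=
  ∀ x y : α, (x ⊓ y) ⋖ x → y ⋖ (x ⊔ y)

/-- `x ∼ y` iff some `z` is covered by both `x` and `y`. -/
def Sim {α : Type*} [Lattice α] (x y : α) : Prop :=
  ∃ z : α, z ⋖ x ∧ z ⋖ y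

/-- The level equivalence: reflexive-transitive closure of `Sim`. -/
def LevelEquiv {α : Type*} [Lattice α] (x y : α) : Prop :=
  Relation.ReflTransGen Sim x y

section Aux

variable {α : Type*} [Lattice α] {h : α → α → ℕ}

lemma maxchain_mem {x y : α} (hxy : x ≤ y) {C : Set α} (hC : MaxChainIn x y C) :
    x ∈ C ∧ y ∈ C := by
  obtain ⟨hsub, hch, hmax⟩ := hC
  have hub : ∀ w ∈ C ∪ ({x, y} : Set α), x ≤ w ∧ w ≤ y := by
    intro w hw
    rcases hw with hw | hw
    · exact ⟨(hsub hw).1, (hsub hw).2⟩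
    · rcases hw with rfl | hw
      · exact ⟨le_refl _, hxy⟩
      · rcases hw with rfl
        exact ⟨hxy, le_refl _⟩
  have hch' : IsChain (· ≤ ·) (C ∪ {x, y}) := by
    intro u hu v hv huv
    rcases hu with hu | hu
    · rcases hv with hv | hv
      · exact hch hu hv huv
      · rcases hv with rfl | hv
        · exact Or.inr (hub _ (Or.inl hu)).1
        · rcases hv with rfl
          exact Or.inl (hub _ (Or.inl hu)).2
    · rcases hu with rfl | hu
      · exact Or.inl (hub _ hv).1
      · rcases hu with rfl
        exact Or.inr (hub _ hv).2
  have hsub' : C ∪ {x, y} ⊆ Set.Icc x y := fun w hw => hub w hw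
  have heq := hmax _ hsub' hch' Set.subset_union_left
  constructor
  · rw [heq]; exact Or.inr (Or.inl rfl)
  · rw [heq]; exact Or.inr (Or.inr rfl)

lemma maxchain_self (a : α) : MaxChainIn a a {a} := by
  refine ⟨by simp, Set.subsingleton_singleton.isChain, ?_⟩
  intro D hD _ hCD
  apply Set.Subset.antisymm hCD
  intro d hd
  have := hD hd
  simp only [Set.Icc_self, Set.mem_singleton_iff] at this
  simp [this]

lemma h_self (hh : ∀ x y : α, x ≤ y → ∀ C : Set α, MaxChainIn x y C → (C \ {x}).ncard = h x y)
    (a : α) : h a a = 0 := by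
  have := hh a a le_rfl {a} (maxchain_self a)
  simpa using this.symm

lemma h_add (hd : IsDiscreteLattice α)
    (hh : ∀ x y : α, x ≤ y → ∀ C : Set α, MaxChainIn x y C → (C \ {x}).ncard = h x y)
    {a b c : α} (hab : a ≤ b) (hbc : b ≤ c) : h a c = h a b + h b c := by
  rcases eq_or_lt_of_le hab with rfl | hab'
  · rw [h_self hh]; omega
  rcases eq_or_lt_of_le hbc with rfl | hbc'
  · rw [h_self hh]; omega
  obtain ⟨C1, hC1, hC1f⟩ := hd a b hab
  obtain ⟨C2, hC2, hC2f⟩ := hd b c hbc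
  have hbC1 := (maxchain_mem hab hC1).2
  have haC1 := (maxchain_mem hab hC1).1
  have hbC2 := (maxchain_mem hbc hC2).1
  have hC1le : ∀ u ∈ C1, u ≤ b := fun u hu => (hC1.1 hu).2
  have hC2ge : ∀ u ∈ C2, b ≤ u := fun u hu => (hC2.1 hu).1
  -- the union is a maximal chain in [a, c]
  have hUmax : MaxChainIn a c (C1 ∪ C2) := by
    refine ⟨?_, ?_, ?_⟩
    · rintro u (hu | hu)
      · exact ⟨(hC1.1 hu).1, le_trans (hC1le u hu) hbc⟩
      · exact ⟨le_trans hab (hC2ge u hu), (hC2.1 hu).2⟩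
    · rintro u (hu | hu) v (hv | hv) huv
      · exact hC1.2.1 hu hv huv
      · exact Or.inl (le_trans (hC1le u hu) (hC2ge v hv))
      · exact Or.inr (le_trans (hC1le v hv) (hC2ge u hu))
      · exact hC2.2.1 hu hv huv
    · intro D hDsub hDch hCD
      have hbD : b ∈ D := hCD (Or.inl hbC1)
      have hD1 : C1 = D ∩ Set.Iic b := by
        refine hC1.2.2 _ ?_ (hDch.mono Set.inter_subset_left) ?_
        · exact fun d hd => ⟨(hDsub hd.1).1, hd.2⟩
        · exact fun u hu => ⟨hCD (Or.inl hu), hC1le u hu⟩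
      have hD2 : C2 = D ∩ Set.Ici b := by
        refine hC2.2.2 _ ?_ (hDch.mono Set.inter_subset_left) ?_
        · exact fun d hd => ⟨hd.2, (hDsub hd.1).2⟩
        · exact fun u hu => ⟨hCD (Or.inr hu), hC2ge u hu⟩
      ext d
      constructor
      · exact fun hd => hCD hd
      · intro hd
        by_cases hdb : d = b
        · exact Or.inl (hdb ▸ hbC1)
        · rcases hDch hd hbD hdb with hle | hle
          · exact Or.inl (hD1 ▸ ⟨hd, hle⟩)
          · exact Or.inr (hD2 ▸ ⟨hd, hle⟩)
  have key := hh a c (le_trans hab hbc) _ hUmax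
  have k1 := hh a b hab _ hC1
  have k2 := hh b c hbc _ hC2
  -- split the count
  have hsplit : (C1 ∪ C2) \ {a} = (C1 \ {a}) ∪ (C2 \ {b}) := by
    have haC2 : a ∉ C2 := fun ha => absurd (hC2ge a ha) (not_le_of_gt hab')
    ext u
    simp only [Set.mem_diff, Set.mem_union, Set.mem_singleton_iff]
    constructor
    · rintro ⟨hu | hu, hua⟩
      · exact Or.inl ⟨hu, hua⟩
      · by_cases hub : u = b
        · exact Or.inl ⟨hub ▸ hbC1, hua⟩
        · exact Or.inr ⟨hu, hub⟩
    · rintro (⟨hu, hua⟩ | ⟨hu, hub⟩)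
      · exact ⟨Or.inl hu, hua⟩
      · exact ⟨Or.inr hu, fun e => haC2 (e ▸ hu)⟩
  have hdisj : Disjoint (C1 \ {a}) (C2 \ {b}) := by
    rw [Set.disjoint_left]
    rintro u ⟨hu1, _⟩ ⟨hu2, hub⟩
    exact hub (le_antisymm (hC1le u hu1) (hC2ge u hu2))
  rw [hsplit, Set.ncard_union_eq hdisj hC1f.diff hC2f.diff, k1, k2] at key
  omega

lemma eq_of_h_eq_zero (hd : IsDiscreteLattice α)
    (hh : ∀ x y : α, x ≤ y → ∀ C : Set α, MaxChainIn x y C → (C \ {x}).ncard = h x y)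
    {a b : α} (hab : a ≤ b) (h0 : h a b = 0) : a = b := by
  obtain ⟨C, hC, hCf⟩ := hd a b hab
  have := hh a b hab _ hC
  rw [h0] at this
  have hdiff : C \ {a} = ∅ := (Set.ncard_eq_zero hCf.diff).1 this
  have hbC := (maxchain_mem hab hC).2
  by_contra hne
  have : b ∈ C \ {a} := ⟨hbC, fun e => hne (e.symm)⟩
  rw [hdiff] at this
  exact this

lemma h_covby (hh : ∀ x y : α, x ≤ y → ∀ C : Set α, MaxChainIn x y C → (C \ {x}).ncard = h x y)
    {a b : α} (hab : a ⋖ b) : h a b = 1 := by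
  have hmax : MaxChainIn a b {a, b} := by
    refine ⟨?_, ?_, ?_⟩
    · rintro u (rfl | hu)
      · exact ⟨le_refl _, hab.le⟩
      · rcases hu with rfl; exact ⟨hab.le, le_refl _⟩
    · rintro u (rfl | hu) v (rfl | hv) huv
      · exact absurd rfl huv
      · rcases hv with rfl; exact Or.inl hab.le
      · rcases hu with rfl; exact Or.inr hab.le
      · rcases hu with rfl; rcases hv with rfl; exact absurd rfl huv
    · intro D hDsub _ hCD
      apply Set.Subset.antisymm hCD
      intro d hd
      rcases hab.eq_or_eq (hDsub hd).1 (hDsub hd).2 with rfl | rfl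
      · exact Or.inl rfl
      · exact Or.inr rfl
  have := hh a b hab.le _ hmax
  rw [← this]
  have : ({a, b} : Set α) \ {a} = {b} := by
    ext u
    simp only [Set.mem_diff, Set.mem_insert_iff, Set.mem_singleton_iff]
    constructor
    · rintro ⟨rfl | rfl, hua⟩
      · exact absurd rfl hua
      · rfl
    · rintro rfl; exact ⟨Or.inr rfl, fun e => hab.ne (e.symm)⟩
  rw [this, Set.ncard_singleton]

lemma exists_covby (hd : IsDiscreteLattice α) {z x : α} (hzx : z < x) : ∃ a, z ⋖ a ∧ a ≤ x := by
  obtain ⟨C, hC, hCf⟩ := hd z x hzx.le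
  obtain ⟨hzC, hxC⟩ := maxchain_mem hzx.le hC
  have hne : (C \ {z}).Nonempty := ⟨x, hxC, fun e => hzx.ne' e⟩
  obtain ⟨a, ha, hamin⟩ := Set.Finite.exists_minimalFor id _ hCf.diff hne
  have haC : a ∈ C := ha.1
  have haz : a ≠ z := ha.2
  have hza : z < a := lt_of_le_of_ne (hC.1 haC).1 (Ne.symm haz)
  have hleast : ∀ c ∈ C \ ({z} : Set α), a ≤ c := by
    intro c hc
    by_cases hca : c = a
    · exact hca.ge
    rcases hC.2.1 haC hc.1 (fun e => hca e.symm) with hle | hle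
    · exact hle
    · exact hamin hc hle
  refine ⟨a, ⟨hza, ?_⟩, (hC.1 haC).2⟩
  intro w hzw hwa
  have hwC : w ∉ C := by
    intro hw
    by_cases hwz : w = z
    · exact hzw.ne' hwz
    · exact absurd (hleast w ⟨hw, hwz⟩) (not_le_of_gt hwa)
  have hch : IsChain (· ≤ ·) (C ∪ {w}) := by
    rintro u (hu | hu) v (hv | hv) huv
    · exact hC.2.1 hu hv huv
    · rcases hv with rfl
      by_cases huz : u = z
      · exact Or.inl (huz ▸ hzw.le)
      · exact Or.inr (le_trans hwa.le (hleast u ⟨hu, huz⟩))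
    · rcases hu with rfl
      by_cases hvz : v = z
      · exact Or.inr (hvz ▸ hzw.le)
      · exact Or.inl (le_trans hwa.le (hleast v ⟨hv, hvz⟩))
    · rcases hu with rfl; rcases hv with rfl; exact absurd rfl huv
  have hsub : C ∪ {w} ⊆ Set.Icc z x := by
    rintro u (hu | hu)
    · exact hC.1 hu
    · rcases hu with rfl
      exact ⟨hzw.le, le_trans hwa.le (hC.1 haC).2⟩
  have := hC.2.2 _ hsub hch Set.subset_union_left
  exact hwC (this ▸ Or.inr rfl)

lemma covby_of_h_eq_one (hd : IsDiscreteLattice α)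
    (hh : ∀ x y : α, x ≤ y → ∀ C : Set α, MaxChainIn x y C → (C \ {x}).ncard = h x y)
    {z x : α} (hzx : z ≤ x) (h1 : h z x = 1) : z ⋖ x := by
  have hne : z ≠ x := by
    rintro rfl
    rw [h_self hh] at h1
    exact absurd h1 (by omega)
  obtain ⟨a, hza, hax⟩ := exists_covby hd (lt_of_le_of_ne hzx hne)
  have hadd := h_add hd hh hza.le hax
  have hca := h_covby hh hza
  have : h a x = 0 := by omega
  have := eq_of_h_eq_zero hd hh hax this
  exact this ▸ hza

lemma diamond (hs : IsSemimodular α) {z a b : α} (hza : z ⋖ a) (hzb : z ⋖ b) (hne : a ≠ b) :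
    a ⊓ b = z ∧ a ⋖ a ⊔ b ∧ b ⋖ a ⊔ b := by
  have hinf : a ⊓ b = z := by
    rcases hza.eq_or_eq (le_inf hza.le hzb.le) inf_le_left with he | he
    · exact he
    · exfalso
      have hab : a ≤ b := he ▸ inf_le_right
      rcases hzb.eq_or_eq hza.le hab with he' | he'
      · exact hza.lt.ne' he'
      · exact hne he'
  have hb : b ⋖ a ⊔ b := hs a b (hinf ▸ hza)
  have ha : a ⋖ a ⊔ b := by
    have := hs b a (by rwa [inf_comm, hinf])
    rwa [sup_comm] at this
  exact ⟨hinf, ha, hb⟩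

lemma h_of_sim (hh : ∀ x y : α, x ≤ y → ∀ C : Set α, MaxChainIn x y C → (C \ {x}).ncard = h x y)
    (hs : IsSemimodular α) {b y : α} (hsim : Sim b y) : h (b ⊓ y) b = h (b ⊓ y) y := by
  obtain ⟨z, hzb, hzy⟩ := hsim
  by_cases hby : b = y
  · rw [hby]
  have hinf := (diamond hs hzb hzy hby).1
  rw [hinf, h_covby hh hzb, h_covby hh hzy]

/-- The sideways move lemma. -/
lemma star (hd : IsDiscreteLattice α) (hs : IsSemimodular α)
    (hh : ∀ x y : α, x ≤ y → ∀ C : Set α, MaxChainIn x y C → (C \ {x}).ncard = h x y) :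
    ∀ m : ℕ, ∀ z b x : α, z ⋖ b → z ≤ x → ¬b ≤ x → h z x = m + 1 →
      ∃ x', LevelEquiv x x' ∧ b ≤ x' ∧ h b x' = m := by
  intro m
  induction m with
  | zero =>
    intro z b x hzb hzx hbx h1
    have hcov : z ⋖ x := covby_of_h_eq_one hd hh hzx h1
    exact ⟨b, Relation.ReflTransGen.single ⟨z, hcov, hzb⟩, le_refl _, h_self hh b⟩
  | succ n ih =>
    intro z b x hzb hzx hbx hm
    have hne : z ≠ x := by
      rintro rfl
      rw [h_self hh] at hm
      exact absurd hm (by omega)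
    obtain ⟨a, hza, hax⟩ := exists_covby hd (lt_of_le_of_ne hzx hne)
    have hax' : h a x = n + 1 := by
      have h1 := h_add hd hh hza.le hax
      have h2 := h_covby hh hza
      omega
    have hab : a ≠ b := fun e => hbx (e ▸ hax)
    obtain ⟨hinf, hac, hbc⟩ := diamond hs hza hzb hab
    have hcx : ¬a ⊔ b ≤ x := fun hc => hbx (le_trans le_sup_right hc)
    obtain ⟨x', hxx', hcx', hcn⟩ := ih a (a ⊔ b) x hac hax hcx hax'
    refine ⟨x', hxx', le_trans le_sup_right hcx', ?_⟩
    have h1 := h_add hd hh hbc.le hcx'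
    have h2 := h_covby hh hbc
    omega

lemma backward (hd : IsDiscreteLattice α) (hs : IsSemimodular α)
    (hh : ∀ x y : α, x ≤ y → ∀ C : Set α, MaxChainIn x y C → (C \ {x}).ncard = h x y) :
    ∀ n : ℕ, ∀ x y : α, h (x ⊓ y) x = n → h (x ⊓ y) y = n → LevelEquiv x y := by
  intro n
  induction n using Nat.strong_induction_on with
  | _ n ih =>
    rcases n with _ | m
    · intro x y hx hy
      have hx' := (eq_of_h_eq_zero hd hh inf_le_left hx).symm
      have hy' := (eq_of_h_eq_zero hd hh inf_le_right hy).symm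
      rw [hx'.trans hy'.symm]
      exact Relation.ReflTransGen.refl
    · intro x y hx hy
      have hzy : x ⊓ y ≠ y := by
        intro e
        rw [e, h_self hh] at hy
        exact absurd hy (by omega)
      obtain ⟨b, hzb, hby⟩ := exists_covby hd (lt_of_le_of_ne inf_le_right hzy)
      have hbx : ¬b ≤ x := by
        intro hbx
        exact hzb.lt.ne' (le_antisymm (le_inf hbx hby) hzb.le)
      obtain ⟨x', hxx', hbx', hbm⟩ := star hd hs hh m _ b x hzb inf_le_left hbx hx
      have hby' : h b y = m := by
        have h1 := h_add hd hh hzb.le hby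
        have h2 := h_covby hh hzb
        omega
      have hbw : b ≤ x' ⊓ y := le_inf hbx' hby
      have e1 := h_add hd hh hbw (inf_le_left (a := x') (b := y))
      have e2 := h_add hd hh hbw (inf_le_right (a := x') (b := y))
      have hlt : h (x' ⊓ y) x' < m + 1 := by omega
      have heq : h (x' ⊓ y) x' = h (x' ⊓ y) y := by omega
      exact Relation.ReflTransGen.trans hxx'
        (ih (h (x' ⊓ y) x') hlt x' y rfl heq.symm)

lemma forward (hd : IsDiscreteLattice α) (hs : IsSemimodular α)
    (hh : ∀ x y : α, x ≤ y → ∀ C : Set α, MaxChainIn x y C → (C \ {x}).ncard = h x y)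
    {x y : α} (hxy : LevelEquiv x y) : h (x ⊓ y) x = h (x ⊓ y) y := by
  induction hxy with
  | refl => rfl
  | @tail b y hxb hby ih =>
    have hR : h (b ⊓ y) b = h (b ⊓ y) y := h_of_sim hh hs hby
    set w := x ⊓ b ⊓ y with hw
    have hw1 : w ≤ x ⊓ b := inf_le_left
    have hw2 : w ≤ b ⊓ y := le_inf (le_trans inf_le_left inf_le_right) inf_le_right
    have hw3 : w ≤ x ⊓ y := le_inf (le_trans inf_le_left inf_le_left) inf_le_right
    have e1 := h_add hd hh hw1 (inf_le_left (a := x) (b := b))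
    have e2 := h_add hd hh hw1 (inf_le_right (a := x) (b := b))
    have e3 := h_add hd hh hw2 (inf_le_left (a := b) (b := y))
    have e4 := h_add hd hh hw2 (inf_le_right (a := b) (b := y))
    have e5 := h_add hd hh hw3 (inf_le_left (a := x) (b := y))
    have e6 := h_add hd hh hw3 (inf_le_right (a := x) (b := y))
    omega

end Aux

theorem stmt4 {α : Type*} [Lattice α] (hd : IsDiscreteLattice α) (hs : IsSemimodular α)
    (h : α → α → ℕ)
    (hh : ∀ x y : α, x ≤ y → ∀ C : Set α, MaxChainIn x y C → (C \ {x}).ncard = h x y)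
    (x y : α) :
    LevelEquiv x y ↔ h (x ⊓ y) x = h (x ⊓ y) y := by
  constructor
  · exact forward hd hs hh
  · intro heq
    exact backward hd hs hh (h (x ⊓ y) x) x y rfl heq.symm
end

section
/- In a discrete semimodular lattice, every level class intersects every maximal chain in exactly one element; that is, each level class is an antichain cutset. -/
section Aux

variable {α : Type*} [Lattice α]

/-- Chains of covering relations of a given length. -/
inductive CovChain : ℕ → α → α → Prop
  | refl (x : α) : CovChain 0 x x
  | tail {n : ℕ} {x y z : α} : CovChain n x y → y ⋖ z → CovChain (n + 1) x z

lemma CovChain.le {n : ℕ} {x y : α} (h : CovChain n x y) : x ≤ y := by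
  induction h with
  | refl => exact le_rfl
  | tail _ h ih => exact ih.trans h.le

lemma CovChain.eq_of_zero {x y : α} (h : CovChain 0 x y) : x = y := by
  cases h; rfl

lemma CovChain.lt {n : ℕ} {x y : α} (h : CovChain (n + 1) x y) : x < y := by
  cases h with
  | tail h2 h3 => exact lt_of_le_of_lt h2.le h3.lt

lemma CovChain.cons {n : ℕ} {x y z : α} (h : x ⋖ y) (h2 : CovChain n y z) :
    CovChain (n + 1) x z := by
  induction h2 with
  | refl => exact (CovChain.refl x).tail h
  | tail _ h3 ih => exact (ih h).tail h3

lemma CovChain.head_decomp {n : ℕ} {x y : α} (h : CovChain (n + 1) x y) :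
    ∃ t, x ⋖ t ∧ CovChain n t y := by
  induction n generalizing y with
  | zero =>
    cases h with
    | tail h2 h3 => cases h2; exact ⟨y, h3, CovChain.refl y⟩
  | succ n ih =>
    cases h with
    | tail h2 h3 =>
      obtain ⟨t, ht, hc⟩ := ih h2
      exact ⟨t, ht, hc.tail h3⟩

lemma CovChain.append {m n : ℕ} {x y z : α} (h1 : CovChain m x y) (h2 : CovChain n y z) :
    CovChain (m + n) x z := by
  induction h2 with
  | refl => exact h1
  | tail _ h3 ih => exact (ih h1).tail h3

lemma maxChainIn_mem_left {x y : α} {C : Set α} (hxy : x ≤ y) (h : MaxChainIn x y C) :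
    x ∈ C := by
  obtain ⟨hsub, hchain, hmax⟩ := h
  have hC : C = insert x C := by
    refine hmax (insert x C) ?_ ?_ (Set.subset_insert x C)
    · intro b hb
      rcases hb with rfl | hb
      · exact ⟨le_rfl, hxy⟩
      · exact hsub hb
    · exact hchain.insert (fun b hb _ => Or.inl (hsub hb).1)
  rw [hC]; exact Set.mem_insert x C

lemma maxChainIn_mem_right {x y : α} {C : Set α} (hxy : x ≤ y) (h : MaxChainIn x y C) :
    y ∈ C := by
  obtain ⟨hsub, hchain, hmax⟩ := h
  have hC : C = insert y C := by
    refine hmax (insert y C) ?_ ?_ (Set.subset_insert y C)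
    · intro b hb
      rcases hb with rfl | hb
      · exact ⟨hxy, le_rfl⟩
      · exact hsub hb
    · exact hchain.insert (fun b hb _ => Or.inr (hsub hb).2)
  rw [hC]; exact Set.mem_insert y C

/-- bottom extraction with residual maximal chain -/
lemma maxChainIn_bot_cov {x y : α} {C : Set α} (hxy : x ≤ y) (hne : x ≠ y)
    (h : MaxChainIn x y C) (hfin : C.Finite) :
    ∃ t ∈ C, x ⋖ t ∧ MaxChainIn t y (C \ {x}) := by
  obtain ⟨hsub, hchain, hmax⟩ := h
  have hxC : x ∈ C := maxChainIn_mem_left hxy ⟨hsub, hchain, hmax⟩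
  have hyC : y ∈ C := maxChainIn_mem_right hxy ⟨hsub, hchain, hmax⟩
  set T : Set α := C \ {x} with hT
  have hyT : y ∈ T := ⟨hyC, fun hy => hne (by simpa using hy.symm)⟩
  have hTfin : T.Finite := hfin.subset Set.diff_subset
  obtain ⟨t, htT, htmin⟩ : ∃ t ∈ T, ∀ b ∈ T, b ≤ t → t = b := by
    obtain ⟨t, ht1, ht2⟩ := hTfin.exists_minimalFor id T ⟨y, hyT⟩
    exact ⟨t, ht1, fun b hb h => le_antisymm (ht2 hb h) h⟩
  -- t is ≤ every element of T
  have hle : ∀ b ∈ T, t ≤ b := by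
    intro b hb
    rcases eq_or_ne t b with rfl | hne'
    · exact le_rfl
    rcases hchain htT.1 hb.1 hne' with h | h
    · exact h
    · exact (htmin b hb h).le
  have hxt : x < t := lt_of_le_of_ne (hsub htT.1).1 (fun he => htT.2 he.symm)
  have hcov : x ⋖ t := by
    refine ⟨hxt, fun s hxs hst => ?_⟩
    have hsC : s ∉ C := by
      intro hsC
      have hsT : s ∈ T := ⟨hsC, fun he => absurd (by simpa using he) hxs.ne'⟩
      exact absurd (hle s hsT) (not_le_of_gt hst)
    have : C = insert s C := by
      refine hmax (insert s C) ?_ ?_ (Set.subset_insert s C)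
      · intro b hb
        rcases hb with rfl | hb
        · exact ⟨hxs.le, hst.le.trans (hsub htT.1).2⟩
        · exact hsub hb
      · refine hchain.insert (fun b hb hne' => ?_)
        rcases eq_or_ne b x with rfl | hbx
        · exact Or.inr hxs.le
        · exact Or.inl (hst.le.trans (hle b ⟨hb, hbx⟩))
    exact hsC (by rw [this]; exact Set.mem_insert s C)
  refine ⟨t, htT.1, hcov, ?_, ?_, ?_⟩
  · intro b hb; exact ⟨hle b hb, (hsub hb.1).2⟩
  · exact hchain.mono Set.diff_subset
  · intro D hD1 hD2 hD3
    have hCD : C = insert x D := by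
      refine hmax (insert x D) ?_ ?_ ?_
      · intro b hb
        rcases hb with rfl | hb
        · exact ⟨le_rfl, hxy⟩
        · exact ⟨hxt.le.trans (hD1 hb).1, (hD1 hb).2⟩
      · exact hD2.insert (fun b hb _ => Or.inl (hxt.le.trans (hD1 hb).1))
      · intro b hb
        rcases eq_or_ne b x with rfl | hbx
        · exact Set.mem_insert b D
        · exact Set.mem_insert_of_mem x (hD3 ⟨hb, hbx⟩)
    apply Set.Subset.antisymm hD3
    intro b hb
    have hbC : b ∈ C := by rw [hCD]; exact Set.mem_insert_of_mem x hb
    have hbx : b ≠ x := by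
      rintro rfl
      exact absurd (hD1 hb).1 (not_le_of_gt hxt)
    exact ⟨hbC, hbx⟩

end Aux
section Aux2

variable {α : Type*} [Lattice α]

/-- top extraction -/
lemma maxChainIn_top_cov {x y : α} {C : Set α} (hxy : x ≤ y) (hne : x ≠ y)
    (h : MaxChainIn x y C) (hfin : C.Finite) :
    ∃ t ∈ C, t ⋖ y := by
  obtain ⟨hsub, hchain, hmax⟩ := h
  have hxC : x ∈ C := maxChainIn_mem_left hxy ⟨hsub, hchain, hmax⟩
  have hyC : y ∈ C := maxChainIn_mem_right hxy ⟨hsub, hchain, hmax⟩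
  set T : Set α := C \ {y} with hT
  have hxT : x ∈ T := ⟨hxC, fun hy => hne (by simpa using hy)⟩
  have hTfin : T.Finite := hfin.subset Set.diff_subset
  obtain ⟨t, htT, htmax⟩ : ∃ t ∈ T, ∀ b ∈ T, t ≤ b → t = b := by
    obtain ⟨t, ht1, ht2⟩ := hTfin.exists_maximalFor id T ⟨x, hxT⟩
    exact ⟨t, ht1, fun b hb h => le_antisymm h (ht2 hb h)⟩
  have hle : ∀ b ∈ T, b ≤ t := by
    intro b hb
    rcases eq_or_ne t b with rfl | hne'
    · exact le_rfl
    rcases hchain htT.1 hb.1 hne' with h | h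
    · exact (htmax b hb h).ge
    · exact h
  have hty : t < y := lt_of_le_of_ne (hsub htT.1).2 htT.2
  refine ⟨t, htT.1, hty, fun s hts hsy => ?_⟩
  have hsC : s ∉ C := by
    intro hsC
    have hsT : s ∈ T := ⟨hsC, hsy.ne⟩
    exact absurd (hle s hsT) (not_le_of_gt hts)
  have : C = insert s C := by
    refine hmax (insert s C) ?_ ?_ (Set.subset_insert s C)
    · intro b hb
      rcases hb with rfl | hb
      · exact ⟨(hsub htT.1).1.trans hts.le, hsy.le⟩
      · exact hsub hb
    · refine hchain.insert (fun b hb hne' => ?_)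
      rcases eq_or_ne b y with rfl | hby
      · exact Or.inl hsy.le
      · exact Or.inr ((hle b ⟨hb, hby⟩).trans hts.le)
  exact hsC (by rw [this]; exact Set.mem_insert s C)

lemma maxChainIn_covChain : ∀ N : ℕ, ∀ x y : α, ∀ C : Set α, x ≤ y → MaxChainIn x y C →
    C.Finite → C.ncard ≤ N → ∃ n, CovChain n x y := by
  intro N
  induction N with
  | zero =>
    intro x y C hxy h hfin hcard
    have hxC : x ∈ C := maxChainIn_mem_left hxy h
    have : C = ∅ := by
      rw [← Set.ncard_eq_zero hfin]; omega
    rw [this] at hxC; exact absurd hxC (Set.notMem_empty x)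
  | succ N ih =>
    intro x y C hxy h hfin hcard
    rcases eq_or_ne x y with rfl | hne
    · exact ⟨0, CovChain.refl x⟩
    obtain ⟨t, htC, hcov, hmax⟩ := maxChainIn_bot_cov hxy hne h hfin
    have hty : t ≤ y := (h.1 htC).2
    have hxC : x ∈ C := maxChainIn_mem_left hxy h
    have hcard' : (C \ {x}).ncard ≤ N := by
      have := Set.ncard_diff_singleton_lt_of_mem hxC hfin
      have h2 := Set.ncard_le_ncard (Set.diff_subset (s := C) (t := {x})) hfin
      omega
    obtain ⟨n, hn⟩ := ih t y (C \ {x}) hty hmax (hfin.subset Set.diff_subset) hcard'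
    exact ⟨n + 1, hn.cons hcov⟩

lemma exists_covChain (hd : IsDiscreteLattice α) {x y : α} (h : x ≤ y) : ∃ n, CovChain n x y := by
  obtain ⟨C, hC, hfin⟩ := hd x y h
  exact maxChainIn_covChain C.ncard x y C h hC hfin le_rfl

/-- Jordan–Hölder: all covering chains between two elements have the same length. -/
lemma covChain_unique (hd : IsDiscreteLattice α) (hs : IsSemimodular α) :
    ∀ m : ℕ, ∀ x y : α, ∀ n : ℕ, CovChain m x y → CovChain n x y → m = n := by
  intro m
  induction m using Nat.strong_induction_on with
  | _ m ihm =>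
    intro x y n h1 h2
    match m, n with
    | 0, n =>
      have := h1.eq_of_zero
      subst this
      cases n with
      | zero => rfl
      | succ n => exact absurd h2.lt (lt_irrefl x)
    | m + 1, 0 =>
      have := h2.eq_of_zero
      subst this
      exact absurd h1.lt (lt_irrefl x)
    | m + 1, n + 1 =>
      obtain ⟨a, hxa, ha⟩ := h1.head_decomp
      obtain ⟨b, hxb, hb⟩ := h2.head_decomp
      rcases eq_or_ne a b with rfl | hab
      · have := ihm m (Nat.lt_succ_self m) a y n ha hb
        omega
      · have hmeet : a ⊓ b = x := by
          by_contra hne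
          have h1' : x < a ⊓ b := lt_of_le_of_ne (le_inf hxa.le hxb.le) (Ne.symm hne)
          have h2' : ¬ (a ⊓ b < a) := hxa.2 h1'
          have h3 : a ⊓ b = a := (lt_or_eq_of_le (inf_le_left : a ⊓ b ≤ a)).resolve_left h2'
          have hab2 : a ≤ b := by rw [← h3]; exact inf_le_right
          exact hxb.2 hxa.lt (lt_of_le_of_ne hab2 hab)
        have hc : a ⊔ b ≤ y := sup_le ha.le hb.le
        have hbc : b ⋖ a ⊔ b := hs a b (by rw [hmeet]; exact hxa)
        have hac : a ⋖ a ⊔ b := by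
          have := hs b a (by rw [inf_comm, hmeet]; exact hxb)
          rwa [sup_comm] at this
        obtain ⟨r, hr⟩ := exists_covChain hd hc
        have e1 : m = r + 1 := ihm m (Nat.lt_succ_self m) a y (r + 1) ha (hr.cons hac)
        have e2 : r + 1 = n := ihm (r + 1) (by omega) b y n (hr.cons hbc) hb
        omega

end Aux2
section Aux3

variable {α : Type*} [Lattice α]

open Classical in
/-- The height of the interval `[x,y]`. -/
noncomputable def ht (x y : α) : ℕ :=
  if h : ∃ n, CovChain n x y then h.choose else 0

lemma ht_covChain {x y : α} (h : ∃ n, CovChain n x y) : CovChain (ht x y) x y := by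
  rw [ht, dif_pos h]
  exact h.choose_spec

variable (hd : IsDiscreteLattice α) (hs : IsSemimodular α)
include hd hs

lemma ht_covChain' {x y : α} (h : x ≤ y) : CovChain (ht x y) x y :=
  ht_covChain (exists_covChain hd h)

lemma ht_eq {n : ℕ} {x y : α} (h : CovChain n x y) : ht x y = n :=
  covChain_unique hd hs _ x y n (ht_covChain ⟨n, h⟩) h

lemma ht_add {x y z : α} (hxy : x ≤ y) (hyz : y ≤ z) : ht x z = ht x y + ht y z :=
  ht_eq hd hs ((ht_covChain' hd hs hxy).append (ht_covChain' hd hs hyz))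

lemma ht_covBy {x y : α} (h : x ⋖ y) : ht x y = 1 :=
  ht_eq hd hs ((CovChain.refl x).tail h)

lemma ht_pos {x y : α} (h : x < y) : 1 ≤ ht x y := by
  rcases Nat.eq_zero_or_pos (ht x y) with h0 | h0
  · have := ht_covChain' hd hs h.le
    rw [h0] at this
    exact absurd this.eq_of_zero h.ne
  · exact h0

lemma eq_of_ht_zero {x y : α} (hle : x ≤ y) (h : ht x y = 0) : x = y := by
  have := ht_covChain' hd hs hle
  rw [h] at this
  exact this.eq_of_zero

lemma covBy_of_ht_one {x y : α} (hle : x ≤ y) (h : ht x y = 1) : x ⋖ y := by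
  have h2 := ht_covChain' hd hs hle
  rw [h] at h2
  obtain ⟨t, hxt, ht0⟩ := h2.head_decomp
  rwa [ht0.eq_of_zero] at hxt

lemma maxChainIn_finite {x y : α} {C : Set α} (hxy : x ≤ y) (h : MaxChainIn x y C) :
    C.Finite := by
  have hinj : Set.InjOn (ht x) C := by
    intro a ha b hb hab
    by_contra hne
    have hcomp := h.2.1 ha hb hne
    have key : ∀ u v : α, u ∈ C → v ∈ C → u < v → ht x u = ht x v → False := by
      intro u v hu hv huv heq
      have h1 : ht x v = ht x u + ht u v := ht_add hd hs (h.1 hu).1 huv.le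
      have h2 : 1 ≤ ht u v := ht_pos hd hs huv
      omega
    rcases hcomp with hle | hle
    · exact key a b ha hb (lt_of_le_of_ne hle hne) hab
    · exact key b a hb ha (lt_of_le_of_ne hle (Ne.symm hne)) hab.symm
  have himg : (ht x '' C).Finite := by
    apply (Set.finite_Iic (ht x y)).subset
    rintro _ ⟨a, ha, rfl⟩
    have : ht x y = ht x a + ht a y := ht_add hd hs (h.1 ha).1 (h.1 ha).2
    simp only [Set.mem_Iic]; omega
  exact Set.Finite.of_finite_image himg hinj

end Aux3
section Aux4

variable {α : Type*} [Lattice α]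

lemma isMaxChain_inter {C : Set α} (hC : IsMaxChain (· ≤ ·) C) {u v : α}
    (hu : u ∈ C) (hv : v ∈ C) (huv : u ≤ v) :
    MaxChainIn u v (C ∩ Set.Icc u v) := by
  refine ⟨Set.inter_subset_right, hC.1.mono Set.inter_subset_left, ?_⟩
  intro D hD1 hD2 hD3
  have hcomp : ∀ c ∈ C, ∀ d ∈ D, c ≤ d ∨ d ≤ c := by
    intro c hc d hdD
    have hd : d ∈ Set.Icc u v := hD1 hdD
    rcases eq_or_ne c u with rfl | hcu
    · exact Or.inl hd.1
    rcases hC.1 hc hu hcu with h | h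
    · exact Or.inl (h.trans hd.1)
    rcases eq_or_ne c v with rfl | hcv
    · exact Or.inr hd.2
    rcases hC.1 hc hv hcv with h' | h'
    · -- u ≤ c ≤ v, so c ∈ D
      have hcD : c ∈ D := hD3 ⟨hc, h, h'⟩
      rcases eq_or_ne c d with rfl | hcd
      · exact Or.inl le_rfl
      · exact hD2 hcD hdD hcd
    · exact Or.inr (hd.2.trans h')
  have hchain : IsChain (· ≤ ·) (C ∪ D) := by
    intro a ha b hb hab
    rcases ha with ha | ha <;> rcases hb with hb | hb
    · exact hC.1 ha hb hab
    · exact hcomp a ha b hb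
    · exact (hcomp b hb a ha).symm
    · exact hD2 ha hb hab
  have hCD : C = C ∪ D := hC.2 hchain Set.subset_union_left
  apply Set.Subset.antisymm hD3
  intro d hd
  refine ⟨?_, hD1 hd⟩
  rw [hCD]; exact Or.inr hd

variable (hd : IsDiscreteLattice α) (hs : IsSemimodular α)
include hd hs

lemma chain_up_cover {C : Set α} (hC : IsMaxChain (· ≤ ·) C) {x s : α}
    (hx : x ∈ C) (hxs : x < s) : ∃ t ∈ C, x ⋖ t := by
  by_cases h : ∃ c ∈ C, x < c
  · obtain ⟨c, hcC, hxc⟩ := h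
    have hD := isMaxChain_inter hC hx hcC hxc.le
    have hDfin := maxChainIn_finite hd hs hxc.le hD
    obtain ⟨t, htD, hcov, _⟩ := maxChainIn_bot_cov hxc.le hxc.ne hD hDfin
    exact ⟨t, htD.1, hcov⟩
  · exfalso
    push_neg at h
    have hall : ∀ c ∈ C, c ≤ x := by
      intro c hc
      rcases eq_or_ne c x with rfl | hcx
      · exact le_rfl
      rcases hC.1 hc hx hcx with h' | h'
      · exact h'
      · exact absurd (lt_of_le_of_ne h' (Ne.symm hcx)) (h c hc)
    have hsC : s ∉ C := fun hsC => absurd (hall s hsC) (not_le_of_gt hxs)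
    have : C = insert s C := by
      apply hC.2 _ (Set.subset_insert s C)
      exact hC.1.insert (fun b hb _ => Or.inr ((hall b hb).trans hxs.le))
    exact hsC (by rw [this]; exact Set.mem_insert s C)

lemma chain_down_cover {C : Set α} (hC : IsMaxChain (· ≤ ·) C) {x s : α}
    (hx : x ∈ C) (hxs : s < x) : ∃ t ∈ C, t ⋖ x := by
  by_cases h : ∃ c ∈ C, c < x
  · obtain ⟨c, hcC, hxc⟩ := h
    have hD := isMaxChain_inter hC hcC hx hxc.le
    have hDfin := maxChainIn_finite hd hs hxc.le hD
    obtain ⟨t, htD, hcov⟩ := maxChainIn_top_cov hxc.le hxc.ne hD hDfin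
    exact ⟨t, htD.1, hcov⟩
  · exfalso
    push_neg at h
    have hall : ∀ c ∈ C, x ≤ c := by
      intro c hc
      rcases eq_or_ne c x with rfl | hcx
      · exact le_rfl
      rcases hC.1 hc hx hcx with h' | h'
      · exact absurd (lt_of_le_of_ne h' hcx) (h c hc)
      · exact h'
    have hsC : s ∉ C := fun hsC => absurd (hall s hsC) (not_le_of_gt hxs)
    have : C = insert s C := by
      apply hC.2 _ (Set.subset_insert s C)
      exact hC.1.insert (fun b hb _ => Or.inl (hxs.le.trans (hall b hb)))
    exact hsC (by rw [this]; exact Set.mem_insert s C)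

end Aux4

section Aux5

variable {α : Type*} [Lattice α]

lemma Sim.symm' {x y : α} (h : Sim x y) : Sim y x := by
  obtain ⟨z, h1, h2⟩ := h; exact ⟨z, h2, h1⟩

lemma LevelEquiv.symm {x y : α} (h : LevelEquiv x y) : LevelEquiv y x :=
  by have : Std.Symm (@Sim α _) := ⟨fun _ _ hxy => hxy.symm'⟩; exact Relation.ReflTransGen.symmetric.symm _ _ h

lemma LevelEquiv.trans {x y z : α} (h1 : LevelEquiv x y) (h2 : LevelEquiv y z) :
    LevelEquiv x z := Relation.ReflTransGen.trans h1 h2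

lemma Sim.levelEquiv {x y : α} (h : Sim x y) : LevelEquiv x y :=
  Relation.ReflTransGen.single h

lemma LevelEquiv.refl' (x : α) : LevelEquiv x x := Relation.ReflTransGen.refl

end Aux5
section Core

variable {α : Type*} [Lattice α]
variable (hd : IsDiscreteLattice α) (hs : IsSemimodular α)
include hd hs

/-- Key lemma: walking a covering chain towards a lower cover `z` of `x`. -/
lemma lemmaG : ∀ k : ℕ, ∀ x z e : α, z ⋖ x → (e ⊓ z) ⋖ e → e ⊔ z = x →
    1 ≤ ht (e ⊓ z) z → ht (e ⊓ z) z ≤ k →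
    ∃ m, e ≤ m ∧ m ⋖ x ∧ LevelEquiv z m := by
  intro k
  induction k with
  | zero => intro x z e _ _ _ h1 h2; omega
  | succ k ihk =>
    intro x z e hzx hde hez h1 h2
    have hdz : e ⊓ z ≤ z := inf_le_right
    rcases eq_or_lt_of_le h1 with heq | hgt
    · -- base case : ht (e ⊓ z) z = 1, so (e ⊓ z) ⋖ z
      have hcov : (e ⊓ z) ⋖ z := covBy_of_ht_one hd hs hdz heq.symm
      refine ⟨e, le_rfl, ?_, Sim.levelEquiv ⟨e ⊓ z, hcov, hde⟩⟩
      have := hs z e (by rwa [inf_comm])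
      rwa [sup_comm, hez] at this
    · -- ht (e ⊓ z) z ≥ 2
      have hk0 : 2 ≤ ht (e ⊓ z) z := hgt
      have hcc : CovChain (ht (e ⊓ z) z) (e ⊓ z) z := ht_covChain' hd hs hdz
      obtain ⟨k', hk'⟩ : ∃ k', ht (e ⊓ z) z = k' + 1 := ⟨ht (e ⊓ z) z - 1, by omega⟩
      rw [hk'] at hcc
      obtain ⟨d', hdd', hchain⟩ := hcc.head_decomp
      have hd'z : d' ≤ z := hchain.le
      have hd'zlt : d' < z := by
        rcases eq_or_lt_of_le hd'z with rfl | h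
        · exfalso
          have := ht_eq hd hs hchain  -- ht d' d' = k'
          have h0 : ht d' d' = 0 := ht_eq hd hs (CovChain.refl d')
          omega
        · exact h
      have hed' : e ⊓ d' = e ⊓ z := le_antisymm (inf_le_inf_left e hd'z)
        (le_inf inf_le_left hdd'.le)
      have hd'e' : d' ⋖ e ⊔ d' := hs e d' (by rw [hed']; exact hde)
      have hee' : e ⋖ e ⊔ d' := by
        have := hs d' e (by rw [inf_comm, hed']; exact hdd')
        rwa [sup_comm] at this
      set e' := e ⊔ d' with he'def
      have he'x : e' ≤ x := by rw [← hez]; exact sup_le le_sup_left (hd'z.trans le_sup_right)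
      have he'ne : e' ≠ x := by
        intro h
        exact hd'e'.2 hd'zlt (by rw [h]; exact hzx.lt)
      have he'x' : e' < x := lt_of_le_of_ne he'x he'ne
      have hgz : e' ⊓ z ≤ z := inf_le_right
      have hd'g : d' ≤ e' ⊓ z := le_inf le_sup_right hd'z
      have hdg : e ⊓ z < e' ⊓ z := lt_of_lt_of_le hdd'.lt hd'g
      have hge' : e' ⊓ z ≤ e' := inf_le_left
      have hgne : e' ⊓ z ≠ e' := by
        intro h
        have hez' : e ≤ z := le_sup_left.trans (h ▸ hgz : e' ≤ z)
        exact hde.ne (le_antisymm inf_le_left (le_inf le_rfl hez'))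
      have hde2 : ht (e ⊓ z) e' = 2 := ht_eq hd hs (((CovChain.refl (e ⊓ z)).tail hde).tail hee')
      have hadd : ht (e ⊓ z) e' = ht (e ⊓ z) (e' ⊓ z) + ht (e' ⊓ z) e' :=
        ht_add hd hs hdg.le hge'
      have h1' : 1 ≤ ht (e ⊓ z) (e' ⊓ z) := ht_pos hd hs hdg
      have h2' : 1 ≤ ht (e' ⊓ z) e' := ht_pos hd hs (lt_of_le_of_ne hge' hgne)
      have hge'cov : (e' ⊓ z) ⋖ e' := covBy_of_ht_one hd hs hge' (by omega)
      have haddz : ht (e ⊓ z) z = ht (e ⊓ z) (e' ⊓ z) + ht (e' ⊓ z) z :=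
        ht_add hd hs hdg.le hgz
      have hgz1 : 1 ≤ ht (e' ⊓ z) z := by
        have hne : e' ⊓ z ≠ z := by
          intro h
          have hze' : z ≤ e' := by rw [← h]; exact inf_le_left
          have : x ≤ e' := by rw [← hez]; exact sup_le le_sup_left hze'
          exact absurd (lt_of_le_of_lt this he'x') (lt_irrefl _)
        exact ht_pos hd hs (lt_of_le_of_ne hgz hne)
      have he'z : e' ⊔ z = x := by
        apply le_antisymm (sup_le he'x hzx.lt.le)
        rw [← hez]; exact sup_le (le_sup_left.trans le_sup_left) le_sup_right
      obtain ⟨m, hm1, hm2, hm3⟩ := ihk x z e' hzx hge'cov he'z hgz1 (by omega)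
      exact ⟨m, hee'.le.trans hm1, hm2, hm3⟩

/-- Any two lower covers of the same element are level equivalent. -/
lemma claimC : ∀ n : ℕ, ∀ x y z : α, y ⋖ x → z ⋖ x → ht (y ⊓ z) x ≤ n →
    LevelEquiv y z := by
  intro n
  induction n with
  | zero =>
    intro x y z hy hz hn
    exfalso
    have : 1 ≤ ht (y ⊓ z) x := ht_pos hd hs (lt_of_le_of_lt inf_le_left hy.lt)
    omega
  | succ n ihn =>
    intro x y z hy hz hn
    rcases eq_or_ne y z with rfl | hyz
    · exact LevelEquiv.refl' y
    have hwy : y ⊓ z < y := by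
      rcases eq_or_lt_of_le (inf_le_left : y ⊓ z ≤ y) with h | h
      · exfalso
        have hyle : y ≤ z := by rw [← h]; exact inf_le_right
        rcases eq_or_lt_of_le hyle with h' | h'
        · exact hyz h'
        · exact absurd hz.lt (hy.2 h')
      · exact h
    have e1 : ht (y ⊓ z) x = ht (y ⊓ z) y + 1 := by
      rw [ht_add hd hs (inf_le_left : y ⊓ z ≤ y) hy.lt.le, ht_covBy hd hs hy]
    have e2 : ht (y ⊓ z) x = ht (y ⊓ z) z + 1 := by
      rw [ht_add hd hs (inf_le_right : y ⊓ z ≤ z) hz.lt.le, ht_covBy hd hs hz]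
    rcases eq_or_lt_of_le (ht_pos hd hs hwy) with h1 | h1
    · -- both distances are 1, direct Sim
      have hcy : (y ⊓ z) ⋖ y := covBy_of_ht_one hd hs inf_le_left h1.symm
      have hcz : (y ⊓ z) ⋖ z := covBy_of_ht_one hd hs inf_le_right (by omega)
      exact Sim.levelEquiv ⟨y ⊓ z, hcy, hcz⟩
    · -- ht (y ⊓ z) y ≥ 2
      have hcc : CovChain (ht (y ⊓ z) y) (y ⊓ z) y := ht_covChain' hd hs inf_le_left
      obtain ⟨k', hk'⟩ : ∃ k', ht (y ⊓ z) y = k' + 1 := ⟨ht (y ⊓ z) y - 1, by omega⟩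
      rw [hk'] at hcc
      obtain ⟨c₁, hwc1, hch⟩ := hcc.head_decomp
      have hc1y : c₁ ≤ y := hch.le
      have hmeet : c₁ ⊓ z = y ⊓ z :=
        le_antisymm (le_inf (inf_le_left.trans hc1y) inf_le_right)
          (le_inf hwc1.le inf_le_right)
      have hc1nz : ¬ c₁ ≤ z := by
        intro h
        exact absurd (le_inf hc1y h) (not_le_of_gt hwc1.lt)
      have hjoin : c₁ ⊔ z = x := by
        have hlt : z < c₁ ⊔ z := lt_of_le_of_ne le_sup_right
          (fun h => hc1nz (by rw [h]; exact le_sup_left))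
        rcases eq_or_lt_of_le (sup_le (hc1y.trans hy.lt.le) hz.lt.le : c₁ ⊔ z ≤ x) with h | h
        · exact h
        · exact absurd h (hz.2 hlt)
      obtain ⟨m, hm1, hm2, hm3⟩ := lemmaG hd hs (ht (y ⊓ z) z) x z c₁ hz
        (by rw [hmeet]; exact hwc1) hjoin (by rw [hmeet]; omega) (by rw [hmeet])
      rcases eq_or_ne y m with rfl | hym
      · exact hm3.symm
      have hc1m : c₁ ≤ y ⊓ m := le_inf hc1y hm1
      have hwlt : y ⊓ z < y ⊓ m := lt_of_lt_of_le hwc1.lt hc1m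
      have eadd : ht (y ⊓ z) y = ht (y ⊓ z) (y ⊓ m) + ht (y ⊓ m) y :=
        ht_add hd hs hwlt.le inf_le_left
      have e3 : ht (y ⊓ m) x = ht (y ⊓ m) y + 1 := by
        rw [ht_add hd hs (inf_le_left : y ⊓ m ≤ y) hy.lt.le, ht_covBy hd hs hy]
      have hp : 1 ≤ ht (y ⊓ z) (y ⊓ m) := ht_pos hd hs hwlt
      have hrec : ht (y ⊓ m) x ≤ n := by omega
      exact (ihn x y m hy hm2 hrec).trans hm3.symm

lemma claimC' {x y z : α} (hy : y ⋖ x) (hz : z ⋖ x) : LevelEquiv y z :=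
  claimC hd hs (ht (y ⊓ z) x) x y z hy hz le_rfl

end Core
section Transfer

variable {α : Type*} [Lattice α]
variable (hd : IsDiscreteLattice α) (hs : IsSemimodular α)
include hd hs

lemma upOne {u yu x' : α} (hcov : u ⋖ yu) (hsim : Sim u x') :
    ∃ y', x' ⋖ y' ∧ LevelEquiv yu y' := by
  obtain ⟨z, hzu, hzx'⟩ := hsim
  rcases eq_or_ne u x' with rfl | hne
  · exact ⟨yu, hcov, LevelEquiv.refl' yu⟩
  have hmeet : u ⊓ x' = z := by
    rcases eq_or_lt_of_le (le_inf hzu.le hzx'.le : z ≤ u ⊓ x') with h | h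
    · exact h.symm
    · exfalso
      have h2 : ¬ (u ⊓ x' < u) := hzu.2 h
      have h3 : u ⊓ x' = u := ((inf_le_left : u ⊓ x' ≤ u).lt_or_eq).resolve_left h2
      have hux' : u ≤ x' := by rw [← h3]; exact inf_le_right
      rcases eq_or_lt_of_le hux' with h' | h'
      · exact hne h'
      · exact hzx'.2 hzu.lt h'
  have hx'v : x' ⋖ u ⊔ x' := hs u x' (by rw [hmeet]; exact hzu)
  have huv : u ⋖ u ⊔ x' := by
    have := hs x' u (by rw [inf_comm, hmeet]; exact hzx')
    rwa [sup_comm] at this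
  rcases eq_or_ne (u ⊔ x') yu with h | h
  · exact ⟨yu, h ▸ hx'v, LevelEquiv.refl' yu⟩
  · exact ⟨u ⊔ x', hx'v, Sim.levelEquiv ⟨u, hcov, huv⟩⟩

lemma lemmaUp {x x' y : α} (h : LevelEquiv x x') (hcov : x ⋖ y) :
    ∃ y', x' ⋖ y' ∧ LevelEquiv y y' := by
  induction h with
  | refl => exact ⟨y, hcov, LevelEquiv.refl' y⟩
  | tail h1 h2 ih =>
    obtain ⟨yu, hyu, hLyu⟩ := ih
    obtain ⟨y', hy', hLy'⟩ := upOne hd hs hyu h2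
    exact ⟨y', hy', hLyu.trans hLy'⟩

lemma lemmaDown {x x' y : α} (h : LevelEquiv x x') (hcov : y ⋖ x) :
    ∃ y', y' ⋖ x' ∧ LevelEquiv y y' := by
  induction h with
  | refl => exact ⟨y, hcov, LevelEquiv.refl' y⟩
  | tail h1 h2 ih =>
    obtain ⟨yu, hyu, hLyu⟩ := ih
    obtain ⟨z, hz1, hz2⟩ := h2
    rcases eq_or_ne yu z with rfl | hne
    · exact ⟨yu, hz2, hLyu⟩
    · exact ⟨z, hz2, hLyu.trans (claimC' hd hs hyu hz1)⟩

lemma anti_aux {x y : α} (h : LevelEquiv x y) :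
    ∃ d, d ≤ x ∧ d ≤ y ∧ ht d x = ht d y := by
  induction h with
  | refl => exact ⟨x, le_rfl, le_rfl, rfl⟩
  | tail h1 h2 ih =>
    obtain ⟨d₀, hd0x, hd0u, hht⟩ := ih
    obtain ⟨z, hzu, hzy⟩ := h2
    refine ⟨d₀ ⊓ z, ?_, ?_, ?_⟩
    · exact inf_le_left.trans hd0x
    · exact inf_le_right.trans hzy.lt.le
    · have e1 : ht (d₀ ⊓ z) x = ht (d₀ ⊓ z) d₀ + ht d₀ x :=
        ht_add hd hs inf_le_left hd0x
      have e2 : ht (d₀ ⊓ z) _ = ht (d₀ ⊓ z) d₀ + ht d₀ _ :=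
        ht_add hd hs inf_le_left hd0u
      have e3 : ht (d₀ ⊓ z) _ = ht (d₀ ⊓ z) z + ht z _ :=
        ht_add hd hs inf_le_right hzu.lt.le
      have e4 : ht (d₀ ⊓ z) _ = ht (d₀ ⊓ z) z + ht z _ :=
        ht_add hd hs inf_le_right hzy.lt.le
      have e5 := ht_covBy hd hs hzu
      have e6 := ht_covBy hd hs hzy
      omega
  
lemma level_antichain {x y : α} (h : LevelEquiv x y) (hxy : x ≤ y) : x = y := by
  obtain ⟨d, hdx, hdy, hht⟩ := anti_aux hd hs h
  have e1 : ht d y = ht d x + ht x y := ht_add hd hs hdx hxy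
  have e2 : ht x y = 0 := by omega
  exact eq_of_ht_zero hd hs hxy e2

end Transfer
section Final

variable {α : Type*} [Lattice α]
variable (hd : IsDiscreteLattice α) (hs : IsSemimodular α)
include hd hs

lemma stepDown {C : Set α} (hC : IsMaxChain (· ≤ ·) C) :
    ∀ n : ℕ, ∀ b b' : α, CovChain n b b' → (∃ x ∈ C, LevelEquiv b' x) →
    ∃ x ∈ C, LevelEquiv b x := by
  intro n
  induction n with
  | zero => intro b b' h hx; rw [h.eq_of_zero]; exact hx
  | succ n ih =>
    intro b b' h hx
    obtain ⟨t, hbt, hc⟩ := h.head_decomp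
    obtain ⟨x, hxC, hLtx⟩ := ih t b' hc hx
    obtain ⟨y', hy'x, hLby'⟩ := lemmaDown hd hs hLtx hbt
    by_cases hy'C : y' ∈ C
    · exact ⟨y', hy'C, hLby'⟩
    · obtain ⟨t', ht'C, ht'x⟩ := chain_down_cover hd hs hC hxC hy'x.lt
      exact ⟨t', ht'C, hLby'.trans (claimC' hd hs hy'x ht'x)⟩

lemma stepUp {C : Set α} (hC : IsMaxChain (· ≤ ·) C) :
    ∀ n : ℕ, ∀ b b' : α, CovChain n b b' → (∃ x ∈ C, LevelEquiv b x) →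
    ∃ x ∈ C, LevelEquiv b' x := by
  intro n b b' h
  induction h with
  | refl => exact id
  | tail h1 h2 ih =>
    intro hx
    obtain ⟨x, hxC, hLtx⟩ := ih hx
    obtain ⟨y', hxy', hLy'⟩ := lemmaUp hd hs hLtx h2
    by_cases hy'C : y' ∈ C
    · exact ⟨y', hy'C, hLy'⟩
    · obtain ⟨t', ht'C, hxt'⟩ := chain_up_cover hd hs hC hxC hxy'.lt
      exact ⟨t', ht'C, hLy'.trans (Sim.levelEquiv ⟨x, hxy', hxt'⟩)⟩

lemma exists_mem {C : Set α} (hC : IsMaxChain (· ≤ ·) C) (a : α) :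
    ∃ x ∈ C, LevelEquiv a x := by
  have hCne : C.Nonempty := by
    rcases Set.eq_empty_or_nonempty C with rfl | h
    · exfalso
      have hch : IsChain (· ≤ ·) ({a} : Set α) := Set.subsingleton_singleton.isChain
      have : (∅ : Set α) = {a} := hC.2 hch (Set.empty_subset _)
      exact absurd this.symm (Set.singleton_ne_empty a)
    · exact h
  obtain ⟨c, hcC⟩ := hCne
  obtain ⟨n₁, h₁⟩ := exists_covChain hd (inf_le_right : a ⊓ c ≤ c)
  obtain ⟨n₂, h₂⟩ := exists_covChain hd (inf_le_left : a ⊓ c ≤ a)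
  have hPm : ∃ x ∈ C, LevelEquiv (a ⊓ c) x :=
    stepDown hd hs hC n₁ (a ⊓ c) c h₁ ⟨c, hcC, LevelEquiv.refl' c⟩
  exact stepUp hd hs hC n₂ (a ⊓ c) a h₂ hPm

end Final

theorem stmt7 {α : Type*} [Lattice α] (hd : IsDiscreteLattice α) (hs : IsSemimodular α)
    (a : α) (C : Set α) (hC : IsMaxChain (· ≤ ·) C) :
    ∃ x : α, {y : α | LevelEquiv a y} ∩ C = {x} := by
  obtain ⟨x, hxC, hax⟩ := exists_mem hd hs hC a
  refine ⟨x, ?_⟩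
  ext y
  simp only [Set.mem_inter_iff, Set.mem_setOf_eq, Set.mem_singleton_iff]
  constructor
  · rintro ⟨hay, hyC⟩
    have hxy : LevelEquiv x y := hax.symm.trans hay
    rcases eq_or_ne y x with h | h
    · exact h
    rcases hC.1 hyC hxC h with h' | h'
    · exact level_antichain hd hs hxy.symm h'
    · exact (level_antichain hd hs hxy h').symm
  · rintro rfl
    exact ⟨hax, hxC⟩
end
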